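/- There is an absolute constant C > 0 such that, uniformly for all x ≥ 2 and all coprime positive integers e, f with e, f ≤ x, one has Σ 1/(ab) · ∏_{p | ab(ae−bf)} (1 + 1/p) ≤ C·(log x)^2, where the sum is over pairs of positive integers a, b ≤ x with gcd(ae, bf) = 1 and ae ≠ bf, and the product runs over the primes p dividing ab(ae−bf). -/

import Mathlib

/-!
Writing `ψ(m)/m = ∏_{p ∣ m} (1 + 1/p) ≤ ∑_{d ∣ m} 1/d` and using that `ψ(m)/m` is
submultiplicative, the summand is at most
`(1/a) ∑_{d₁ ∣ a} 1/d₁ · (1/b) ∑_{d₂ ∣ b} 1/d₂ · ∑_{d₃ ∣ ae - bf} 1/d₃`.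
For fixed `a`, `d₂`, `d₃` the condition `gcd(ae, bf) = 1` makes `f` invertible modulo `d₃` and
`d₂` coprime to `d₃`, so the admissible `b` form one residue class modulo `d₂ d₃` inside the
multiples of `d₂`; their reciprocals sum to `O(1/d₂ + log x / (d₂ d₃))`. Summing over `d₂ ≤ x`,
`d₃ ≤ x²` bounds the `b`-sum by `O(log x)` uniformly in `a`, and the `a`-sum costs another `log x`.
-/

open Finset Real

/-- `psiRatio m = ψ(m) / m`, where `ψ` is Dedekind's psi function. -/
noncomputable def psiRatio (m : ℕ) : ℝ := ∏ p ∈ m.primeFactors, (1 + (p : ℝ)⁻¹)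

lemma one_le_psiRatio (m : ℕ) : 1 ≤ psiRatio m :=
  one_le_prod fun p _ => le_add_of_nonneg_right (by positivity)

lemma psiRatio_nonneg (m : ℕ) : 0 ≤ psiRatio m := zero_le_one.trans (one_le_psiRatio m)

lemma psiRatio_mul_le {m n : ℕ} (hm : m ≠ 0) (hn : n ≠ 0) :
    psiRatio (m * n) ≤ psiRatio m * psiRatio n := by
  unfold psiRatio
  rw [Nat.primeFactors_mul hm hn, ← prod_union_inter]
  exact le_mul_of_one_le_right (prod_nonneg fun p _ => by positivity)
    (one_le_prod fun p _ => le_add_of_nonneg_right (by positivity))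

lemma psiRatio_le_sum_divisors_inv {m : ℕ} (hm : m ≠ 0) :
    psiRatio m ≤ ∑ d ∈ m.divisors, (d : ℝ)⁻¹ := by
  have hprime : ∀ t ∈ m.primeFactors.powerset, ∀ p ∈ t, p.Prime := fun t ht p hp =>
    Nat.prime_of_mem_primeFactors (mem_powerset.1 ht hp)
  have hinj : Set.InjOn (fun t : Finset ℕ => ∏ p ∈ t, p) m.primeFactors.powerset :=
    fun s hs t ht hst => by
      rw [← Nat.primeFactors_prod (hprime s hs), ← Nat.primeFactors_prod (hprime t ht)]
      exact congrArg Nat.primeFactors hst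
  calc psiRatio m = ∑ t ∈ m.primeFactors.powerset, ((∏ p ∈ t, p : ℕ) : ℝ)⁻¹ := by
        simp only [psiRatio, prod_one_add, Nat.cast_prod, prod_inv_distrib]
    _ = ∑ d ∈ m.primeFactors.powerset.image (fun t => ∏ p ∈ t, p), (d : ℝ)⁻¹ := by
        rw [sum_image hinj]
    _ ≤ ∑ d ∈ m.divisors, (d : ℝ)⁻¹ := by
        refine sum_le_sum_of_subset_of_nonneg ?_ fun _ _ _ => by positivity
        intro d hd
        obtain ⟨t, ht, rfl⟩ := mem_image.1 hd
        refine Nat.mem_divisors.2 ⟨?_, hm⟩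
        exact (prod_dvd_prod_of_subset _ _ _ (mem_powerset.1 ht)).trans m.prod_primeFactors_dvd

lemma psiRatio_le_sum_Icc_inv {m N : ℕ} (hm : m ≠ 0) (hmN : m ≤ N) :
    psiRatio m ≤ ∑ d ∈ Icc 1 N with d ∣ m, (d : ℝ)⁻¹ := by
  refine (psiRatio_le_sum_divisors_inv hm).trans
    (sum_le_sum_of_subset_of_nonneg (fun d hd => ?_) fun _ _ _ => by positivity)
  obtain ⟨hdm, -⟩ := Nat.mem_divisors.1 hd
  have := Nat.le_of_dvd (Nat.pos_of_ne_zero hm) hdm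
  have := Nat.pos_of_dvd_of_pos hdm (Nat.pos_of_ne_zero hm)
  simp only [mem_filter, mem_Icc]
  exact ⟨⟨by omega, by omega⟩, hdm⟩

lemma sum_Icc_inv_le_one_add_log {n : ℕ} {y : ℝ} (hy : 1 ≤ y) (hny : (n : ℝ) ≤ y) :
    ∑ k ∈ Icc 1 n, (k : ℝ)⁻¹ ≤ 1 + log y := by
  have hlog : log n ≤ log y := by
    rcases n.eq_zero_or_pos with rfl | hn
    · simpa using log_nonneg hy
    · exact log_le_log (by positivity) hny
  have := harmonic_le_one_add_log n
  rw [harmonic_eq_sum_Icc] at this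
  push_cast at this
  linarith

lemma sum_Icc_inv_sq_le_two (n : ℕ) : ∑ k ∈ Icc 1 n, ((k : ℝ) ^ 2)⁻¹ ≤ 2 := by
  have h : Icc 1 n = Ioo 0 (n + 1) := by ext; simp; omega
  simpa [h] using sum_Ioo_inv_sq_le (α := ℝ) 0 (n + 1)

lemma mul_dvd_sub_of_isCoprime {A B C F d₂ d₃ : ℤ} (hcop : IsCoprime A (B * F))
    (hB : d₂ ∣ B) (hC : d₂ ∣ C) (hB₃ : d₃ ∣ A - B * F) (hC₃ : d₃ ∣ A - C * F) :
    d₂ * d₃ ∣ C - B := by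
  have h₃ : IsCoprime d₃ (B * F) := by
    refine IsCoprime.of_isCoprime_of_dvd_left ?_ hB₃
    simpa using IsCoprime.sub_mul_left_left_iff (z := 1) |>.2 hcop
  have hF : d₃ ∣ (C - B) * F := by
    rw [show (C - B) * F = A - B * F - (A - C * F) by ring]
    exact dvd_sub hB₃ hC₃
  exact (h₃.of_mul_right_left.of_isCoprime_of_dvd_right hB).symm.mul_dvd (dvd_sub hC hB)
    (h₃.of_mul_right_right.dvd_of_dvd_mul_right hF)

lemma sum_inv_le_of_modEq {T : Finset ℕ} {n q r : ℕ} (hT : T ⊆ Icc 1 n) (hq : 0 < q)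
    (hr : 0 < r) (hrT : ∀ b ∈ T, r ≤ b) (hmod : ∀ b ∈ T, ∀ c ∈ T, b ≡ c [MOD q]) :
    ∑ b ∈ T, (b : ℝ)⁻¹ ≤ (r : ℝ)⁻¹ + (q : ℝ)⁻¹ * ∑ k ∈ Icc 1 n, (k : ℝ)⁻¹ := by
  rcases T.eq_empty_or_nonempty with rfl | hne
  · simp only [sum_empty]; positivity
  set b₀ := T.min' hne
  have hb₀ : b₀ ∈ T := T.min'_mem hne
  -- every other element of `T` is `b₀ + q * k` with `1 ≤ k ≤ n`
  set k : ℕ → ℕ := fun b => (b - b₀) / q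
  have hk : ∀ b ∈ T.erase b₀, q * k b = b - b₀ ∧ k b ∈ Icc 1 n := by
    intro b hb
    obtain ⟨hne, hbT⟩ := mem_erase.1 hb
    have hlt : b₀ < b := lt_of_le_of_ne (T.min'_le b hbT) (Ne.symm hne)
    have hqk : q * k b = b - b₀ :=
      Nat.mul_div_cancel' ((Nat.modEq_iff_dvd' hlt.le).1 (hmod b₀ hb₀ b hbT))
    have hbn := (mem_Icc.1 (hT hbT)).2
    have : k b ≤ q * k b := Nat.le_mul_of_pos_left _ hq
    refine ⟨hqk, mem_Icc.2 ⟨Nat.pos_of_ne_zero fun h => ?_, by omega⟩⟩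
    rw [h, mul_zero] at hqk
    omega
  rw [← add_sum_erase T _ hb₀]
  gcongr
  · exact hrT b₀ hb₀
  calc ∑ b ∈ T.erase b₀, (b : ℝ)⁻¹ ≤ ∑ b ∈ T.erase b₀, (q : ℝ)⁻¹ * (k b : ℝ)⁻¹ := by
        refine sum_le_sum fun b hb => ?_
        have hpos : 0 < b - b₀ := (hk b hb).1 ▸ Nat.mul_pos hq (mem_Icc.1 (hk b hb).2).1
        rw [← mul_inv, ← Nat.cast_mul, (hk b hb).1]
        gcongr
        omega
    _ = ∑ j ∈ (T.erase b₀).image k, (q : ℝ)⁻¹ * (j : ℝ)⁻¹ := by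
        rw [sum_image]
        intro b hb c hc hbc
        have := congrArg (q * ·) hbc
        simp only [(hk b hb).1, (hk c hc).1] at this
        have := T.min'_le b (mem_of_mem_erase hb)
        have := T.min'_le c (mem_of_mem_erase hc)
        omega
    _ ≤ (q : ℝ)⁻¹ * ∑ j ∈ Icc 1 n, (j : ℝ)⁻¹ := by
        rw [mul_sum]
        refine sum_le_sum_of_subset_of_nonneg ?_ fun _ _ _ => by positivity
        intro j hj
        obtain ⟨b, hb, rfl⟩ := mem_image.1 hj
        exact (hk b hb).2

lemma sum_inv_le_of_dvd_sub {T : Finset ℕ} {A f n d₂ d₃ : ℕ} (hT : T ⊆ Icc 1 n)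
    (hd₂ : 0 < d₂) (hd₃ : 0 < d₃) (hcop : ∀ b ∈ T, A.Coprime (b * f))
    (h₂ : ∀ b ∈ T, d₂ ∣ b) (h₃ : ∀ b ∈ T, (d₃ : ℤ) ∣ A - b * f) :
    ∑ b ∈ T, (b : ℝ)⁻¹ ≤ (d₂ : ℝ)⁻¹ + ((d₂ : ℝ) * d₃)⁻¹ * ∑ k ∈ Icc 1 n, (k : ℝ)⁻¹ := by
  refine mod_cast sum_inv_le_of_modEq hT (Nat.mul_pos hd₂ hd₃) hd₂
    (fun b hb => Nat.le_of_dvd (mem_Icc.1 (hT hb)).1 (h₂ b hb)) fun b hb c hc => ?_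
  have hcop' : IsCoprime (A : ℤ) (b * f) := mod_cast Nat.isCoprime_iff_coprime.2 (hcop b hb)
  exact Nat.modEq_iff_dvd.2 (mod_cast mul_dvd_sub_of_isCoprime hcop'
    (Int.natCast_dvd_natCast.2 (h₂ b hb)) (Int.natCast_dvd_natCast.2 (h₂ c hc))
    (h₃ b hb) (h₃ c hc))

lemma sum_inv_mul_psiRatio_mul_psiRatio_sub_le {A f n : ℕ} {y : ℝ} (hA : A ≤ n ^ 2)
    (hf : f ≤ n) (hy : 1 ≤ y) (hny : (n : ℝ) ≤ y) :
    ∑ b ∈ Icc 1 n, (if A.gcd (b * f) = 1 ∧ A ≠ b * f then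
      (b : ℝ)⁻¹ * (psiRatio b * psiRatio ((A : ℤ) - b * f).natAbs) else 0) ≤
      8 * (1 + log y) := by
  set H := ∑ k ∈ Icc 1 n, (k : ℝ)⁻¹
  set m : ℕ → ℕ := fun b => ((A : ℤ) - b * f).natAbs
  set D := Icc 1 n ×ˢ Icc 1 (n ^ 2)
  set B := {b ∈ Icc 1 n | A.gcd (b * f) = 1 ∧ A ≠ b * f}
  have hterm : ∀ b ∈ B, (b : ℝ)⁻¹ * (psiRatio b * psiRatio (m b)) ≤
      ∑ d ∈ D with d.1 ∣ b ∧ d.2 ∣ m b, (b : ℝ)⁻¹ * ((d.1 : ℝ) * d.2)⁻¹ := by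
    intro b hb
    obtain ⟨hbI, -, hne⟩ := mem_filter.1 hb
    obtain ⟨hb1, hbn⟩ := mem_Icc.1 hbI
    have hbf : b * f ≤ n ^ 2 := sq n ▸ Nat.mul_le_mul hbn hf
    have hm0 : m b ≠ 0 := by simp only [m]; omega
    have hmn : m b ≤ n ^ 2 := by simp only [m]; omega
    rw [← mul_sum, filter_product (p := (· ∣ b)) (q := (· ∣ m b)), sum_product]
    simp only [mul_inv, ← mul_sum, ← sum_mul]
    refine mul_le_mul_of_nonneg_left (mul_le_mul (psiRatio_le_sum_Icc_inv (by omega) hbn)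
      (psiRatio_le_sum_Icc_inv hm0 hmn) (psiRatio_nonneg _)
      (sum_nonneg fun _ _ => by positivity)) (by positivity)
  have hclass : ∀ d ∈ D, ∑ b ∈ B with d.1 ∣ b ∧ d.2 ∣ m b, (b : ℝ)⁻¹ ≤
      (d.1 : ℝ)⁻¹ + ((d.1 : ℝ) * d.2)⁻¹ * H := by
    intro d hd
    obtain ⟨hd₂, hd₃⟩ := mem_product.1 hd
    refine sum_inv_le_of_dvd_sub (A := A) (f := f) ((filter_subset _ _).trans (filter_subset _ _))
      (mem_Icc.1 hd₂).1 (mem_Icc.1 hd₃).1 (fun b hb => ?_) (fun b hb => ?_) fun b hb => ?_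
    · exact (mem_filter.1 (mem_filter.1 hb).1).2.1
    · exact (mem_filter.1 hb).2.1
    · exact Int.natCast_dvd.2 (mem_filter.1 hb).2.2
  have hH : H ≤ 1 + log y := sum_Icc_inv_le_one_add_log hy hny
  have hH₂ : ∑ k ∈ Icc 1 (n ^ 2), (k : ℝ)⁻¹ ≤ 1 + 2 * log y := by
    have := sum_Icc_inv_le_one_add_log (n := n ^ 2) (one_le_pow₀ hy)
      (by push_cast; exact pow_le_pow_left₀ n.cast_nonneg hny 2)
    rwa [log_pow, Nat.cast_ofNat] at this
  calc _ = ∑ b ∈ B, (b : ℝ)⁻¹ * (psiRatio b * psiRatio (m b)) := (sum_filter _ _).symm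
    _ ≤ ∑ b ∈ B, ∑ d ∈ D with d.1 ∣ b ∧ d.2 ∣ m b, (b : ℝ)⁻¹ * ((d.1 : ℝ) * d.2)⁻¹ :=
        sum_le_sum hterm
    _ = ∑ d ∈ D, ((d.1 : ℝ) * d.2)⁻¹ * ∑ b ∈ B with d.1 ∣ b ∧ d.2 ∣ m b, (b : ℝ)⁻¹ := by
        rw [sum_comm' (t' := D) (s' := fun d => {b ∈ B | d.1 ∣ b ∧ d.2 ∣ m b})
          (fun b d => by simp only [mem_filter]; tauto)]
        simp only [mul_sum, mul_comm]
    _ ≤ ∑ d ∈ D, ((d.1 : ℝ) * d.2)⁻¹ * ((d.1 : ℝ)⁻¹ + ((d.1 : ℝ) * d.2)⁻¹ * H) :=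
        sum_le_sum fun d hd => mul_le_mul_of_nonneg_left (hclass d hd) (by positivity)
    _ = (∑ d₂ ∈ Icc 1 n, ((d₂ : ℝ) ^ 2)⁻¹) * ∑ d₃ ∈ Icc 1 (n ^ 2), (d₃ : ℝ)⁻¹ +
          H * ((∑ d₂ ∈ Icc 1 n, ((d₂ : ℝ) ^ 2)⁻¹) * ∑ d₃ ∈ Icc 1 (n ^ 2), ((d₃ : ℝ) ^ 2)⁻¹) := by
        rw [sum_product, sum_mul_sum, sum_mul_sum, mul_sum, ← sum_add_distrib]
        refine sum_congr rfl fun _ _ => ?_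
        rw [mul_sum, ← sum_add_distrib]
        exact sum_congr rfl fun _ _ => by ring
    _ ≤ 2 * (1 + 2 * log y) + (1 + log y) * (2 * 2) := by
        have := log_nonneg hy
        gcongr <;> exact sum_Icc_inv_sq_le_two _
    _ ≤ 8 * (1 + log y) := by linarith [log_nonneg hy]

lemma sum_inv_mul_psiRatio_le {n : ℕ} {y : ℝ} (hy : 1 ≤ y) (hny : (n : ℝ) ≤ y) :
    ∑ a ∈ Icc 1 n, (a : ℝ)⁻¹ * psiRatio a ≤ 2 * (2 + log y) := by
  set H := ∑ k ∈ Icc 1 n, (k : ℝ)⁻¹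
  calc ∑ a ∈ Icc 1 n, (a : ℝ)⁻¹ * psiRatio a
      ≤ ∑ a ∈ Icc 1 n, ∑ d ∈ Icc 1 n with d ∣ a, (a : ℝ)⁻¹ * (d : ℝ)⁻¹ :=
        sum_le_sum fun a ha => by
          obtain ⟨ha1, han⟩ := mem_Icc.1 ha
          rw [← mul_sum]
          exact mul_le_mul_of_nonneg_left (psiRatio_le_sum_Icc_inv (by omega) han) (by positivity)
    _ = ∑ d ∈ Icc 1 n, (d : ℝ)⁻¹ * ∑ a ∈ Icc 1 n with d ∣ a, (a : ℝ)⁻¹ := by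
        rw [sum_comm' (t' := Icc 1 n) (s' := fun d => {a ∈ Icc 1 n | d ∣ a})
          (fun a d => by simp only [mem_filter]; tauto)]
        simp only [mul_sum, mul_comm]
    _ ≤ ∑ d ∈ Icc 1 n, (d : ℝ)⁻¹ * ((d : ℝ)⁻¹ + (d : ℝ)⁻¹ * H) := by
        refine sum_le_sum fun d hd => mul_le_mul_of_nonneg_left ?_ (by positivity)
        have hd1 := (mem_Icc.1 hd).1
        refine sum_inv_le_of_modEq (filter_subset _ _) hd1 hd1
          (fun a ha => Nat.le_of_dvd (mem_Icc.1 (mem_filter.1 ha).1).1 (mem_filter.1 ha).2)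
          fun a ha c hc => ?_
        exact (Nat.modEq_zero_iff_dvd.2 (mem_filter.1 ha).2).trans
          (Nat.modEq_zero_iff_dvd.2 (mem_filter.1 hc).2).symm
    _ = (∑ d ∈ Icc 1 n, ((d : ℝ) ^ 2)⁻¹) * (1 + H) := by
        rw [sum_mul]
        exact sum_congr rfl fun _ _ => by ring
    _ ≤ 2 * (2 + log y) := by
        have := sum_Icc_inv_le_one_add_log hy hny
        exact mul_le_mul (sum_Icc_inv_sq_le_two n) (by linarith)
          (by positivity) zero_le_two

lemma inv_mul_psiRatio_mul_mul_le {a b m : ℕ} (ha : a ≠ 0) (hb : b ≠ 0) (hm : m ≠ 0) :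
    1 / ((a : ℝ) * b) * psiRatio (a * b * m) ≤
      (a : ℝ)⁻¹ * psiRatio a * ((b : ℝ)⁻¹ * (psiRatio b * psiRatio m)) := by
  have hψ : psiRatio (a * b * m) ≤ psiRatio a * psiRatio b * psiRatio m :=
    (psiRatio_mul_le (mul_ne_zero ha hb) hm).trans <| mul_le_mul_of_nonneg_right
      (psiRatio_mul_le ha hb) (psiRatio_nonneg m)
  calc 1 / ((a : ℝ) * b) * psiRatio (a * b * m)
      ≤ 1 / ((a : ℝ) * b) * (psiRatio a * psiRatio b * psiRatio m) := by gcongr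
    _ = _ := by rw [one_div, mul_inv]; ring

lemma sum_abef_term_le {a e f n : ℕ} {y : ℝ} (ha : a ∈ Icc 1 n) (he : e ≤ n) (hf : f ≤ n)
    (hy : 1 ≤ y) (hny : (n : ℝ) ≤ y) :
    ∑ b ∈ Icc 1 n, (if Nat.gcd (a * e) (b * f) = 1 ∧ a * e ≠ b * f then
        (1 : ℝ) / (a * b) * psiRatio (a * b * ((a * e : ℤ) - (b * f : ℤ)).natAbs) else 0) ≤
      (a : ℝ)⁻¹ * psiRatio a * (8 * (1 + log y)) := by
  obtain ⟨ha1, han⟩ := mem_Icc.1 ha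
  have hA : a * e ≤ n ^ 2 := sq n ▸ Nat.mul_le_mul han he
  calc _ ≤ ∑ b ∈ Icc 1 n, (a : ℝ)⁻¹ * psiRatio a *
        (if Nat.gcd (a * e) (b * f) = 1 ∧ a * e ≠ b * f then (b : ℝ)⁻¹ *
          (psiRatio b * psiRatio (((a * e : ℕ) : ℤ) - b * f).natAbs) else 0) := by
        refine sum_le_sum fun b hb => ?_
        split_ifs with hc
        · push_cast
          refine inv_mul_psiRatio_mul_mul_le (by omega) (by have := (mem_Icc.1 hb).1; omega) ?_
          have := hc.2
          omega
        · rw [mul_zero]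
    _ = (a : ℝ)⁻¹ * psiRatio a * ∑ b ∈ Icc 1 n,
        (if Nat.gcd (a * e) (b * f) = 1 ∧ a * e ≠ b * f then (b : ℝ)⁻¹ *
          (psiRatio b * psiRatio (((a * e : ℕ) : ℤ) - b * f).natAbs) else 0) := (mul_sum _ _ _).symm
    _ ≤ _ := mul_le_mul_of_nonneg_left
        (sum_inv_mul_psiRatio_mul_psiRatio_sub_le hA hf hy hny)
        (mul_nonneg (by positivity) (psiRatio_nonneg a))

theorem abef_sum_bound :
    ∃ C : ℝ, C > 0 ∧ ∀ x : ℝ, x ≥ 2 → ∀ e f : ℕ, 0 < e → 0 < f →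
      Nat.Coprime e f → (e : ℝ) ≤ x → (f : ℝ) ≤ x →
      ∑ a ∈ Finset.Icc 1 ⌊x⌋₊, ∑ b ∈ Finset.Icc 1 ⌊x⌋₊,
        (if Nat.gcd (a * e) (b * f) = 1 ∧ a * e ≠ b * f then
          (1 : ℝ) / (a * b) *
            ∏ p ∈ (a * b * ((a * e : ℤ) - (b * f : ℤ)).natAbs).primeFactors,
              (1 + (p : ℝ)⁻¹)
        else 0)
        ≤ C * (Real.log x) ^ 2 := by
  refine ⟨240, by norm_num, fun x hx e f _ _ _ hex hfx => ?_⟩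
  have hx1 : (1 : ℝ) ≤ x := by linarith
  have hnx : (⌊x⌋₊ : ℝ) ≤ x := Nat.floor_le (by linarith)
  have hlog : 1 / 2 ≤ log x := by linarith [log_two_gt_d9, log_le_log two_pos hx]
  calc _ ≤ ∑ a ∈ Icc 1 ⌊x⌋₊, (a : ℝ)⁻¹ * psiRatio a * (8 * (1 + log x)) :=
        sum_le_sum fun a ha => sum_abef_term_le ha (Nat.le_floor hex) (Nat.le_floor hfx) hx1 hnx
    _ ≤ 2 * (2 + log x) * (8 * (1 + log x)) := by
        rw [← sum_mul]
        gcongr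
        exact sum_inv_mul_psiRatio_le hx1 hnx
    _ ≤ 240 * log x ^ 2 := by
        have := mul_nonneg (show 0 ≤ 2 * log x - 1 by linarith)
          (show 0 ≤ 7 * log x + 2 by linarith)
        nlinarith
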